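/- If the arbitrage index of a cycle of length n+1 satisfies I ≤ 1/(r₁^{n+1}·r₂^{n+1}), then for every input δ > 0 the utility of the cyclic transaction is strictly negative: U(δ) < 0. -/

import Mathlib

/-- Constant-product AMM swap: output of swapping input `δ` through a pool with
input-side reserve `a`, output-side reserve `b` and fee parameters `r1, r2`. -/
noncomputable def swap (r1 r2 a b δ : ℝ) : ℝ := r1 * r2 * b * δ / (a + r1 * δ)

/-- Output of feeding an input through a sequence of pools; each pool is a pair
`(input-side reserve, output-side reserve)` along the direction of trade. -/
noncomputable def cyclicOut (r1 r2 : ℝ) : List (ℝ × ℝ) → ℝ → ℝ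
  | [], δ => δ
  | p :: ps, δ => cyclicOut r1 r2 ps (swap r1 r2 p.1 p.2 δ)

/-- Arbitrage index of a cycle of pools: product of output-side reserves divided
by product of input-side reserves. -/
noncomputable def arbIndex (ps : List (ℝ × ℝ)) : ℝ :=
  (ps.map Prod.snd).prod / (ps.map Prod.fst).prod

/-- The reversed cycle: the same pools in opposite order with the roles of the
two reserves of each pool interchanged. -/
def revPools (ps : List (ℝ × ℝ)) : List (ℝ × ℝ) := (ps.map Prod.swap).reverse

/-- The updated pools after executing a cyclic transaction with input `δ`:
each pool's input-side reserve increases by the amount swapped in and its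
output-side reserve decreases by the amount swapped out. -/
noncomputable def execPools (r1 r2 : ℝ) : List (ℝ × ℝ) → ℝ → List (ℝ × ℝ)
  | [], _ => []
  | p :: ps, δ =>
      (p.1 + δ, p.2 - swap r1 r2 p.1 p.2 δ) :: execPools r1 r2 ps (swap r1 r2 p.1 p.2 δ)

/-!
Each swap is bounded by its marginal rate at zero input,
`swap r1 r2 a b δ ≤ r1 * r2 * (b / a) * δ`, strictly when `δ > 0`, because the denominator
`a + r1 * δ` exceeds `a`. Composing these linear bounds along the cycle gives
`out(δ) < (r1 * r2) ^ (n + 1) * I * δ`, and the hypothesis on the arbitrage index `I` says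
exactly that this factor is at most `1`.
-/

section Swap

variable {r1 r2 a b δ : ℝ}

lemma swap_nonneg (hr1 : 0 ≤ r1) (hr2 : 0 ≤ r2) (ha : 0 < a) (hb : 0 ≤ b) (hδ : 0 ≤ δ) :
    0 ≤ swap r1 r2 a b δ := by
  unfold swap
  positivity

lemma swap_le (hr1 : 0 ≤ r1) (hr2 : 0 ≤ r2) (ha : 0 < a) (hb : 0 ≤ b) (hδ : 0 ≤ δ) :
    swap r1 r2 a b δ ≤ r1 * r2 * (b / a) * δ := calc
  swap r1 r2 a b δ ≤ r1 * r2 * b * δ / a :=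
    div_le_div_of_nonneg_left (by positivity) ha (le_add_of_nonneg_right (by positivity))
  _ = r1 * r2 * (b / a) * δ := by ring

lemma swap_lt (hr1 : 0 < r1) (hr2 : 0 < r2) (ha : 0 < a) (hb : 0 < b) (hδ : 0 < δ) :
    swap r1 r2 a b δ < r1 * r2 * (b / a) * δ := calc
  swap r1 r2 a b δ < r1 * r2 * b * δ / a :=
    div_lt_div_of_pos_left (by positivity) ha (lt_add_of_pos_right a (by positivity))
  _ = r1 * r2 * (b / a) * δ := by ring

end Swap

@[simp]
lemma arbIndex_nil : arbIndex [] = 1 := by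
  simp [arbIndex]

lemma arbIndex_cons (p : ℝ × ℝ) (ps : List (ℝ × ℝ)) :
    arbIndex (p :: ps) = p.2 / p.1 * arbIndex ps := by
  simp [arbIndex, div_mul_div_comm]

lemma arbIndex_pos {ps : List (ℝ × ℝ)} (hpos : ∀ p ∈ ps, 0 < p.1 ∧ 0 < p.2) :
    0 < arbIndex ps := by
  have hsnd : 0 < (ps.map Prod.snd).prod :=
    List.prod_pos fun _ hx => by
      obtain ⟨p, hp, rfl⟩ := List.mem_map.1 hx
      exact (hpos p hp).2
  have hfst : 0 < (ps.map Prod.fst).prod :=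
    List.prod_pos fun _ hx => by
      obtain ⟨p, hp, rfl⟩ := List.mem_map.1 hx
      exact (hpos p hp).1
  exact div_pos hsnd hfst

section CyclicOut

variable {r1 r2 : ℝ}

lemma cyclicOut_le (hr1 : 0 ≤ r1) (hr2 : 0 ≤ r2) {ps : List (ℝ × ℝ)}
    (hpos : ∀ p ∈ ps, 0 < p.1 ∧ 0 < p.2) {δ : ℝ} (hδ : 0 ≤ δ) :
    cyclicOut r1 r2 ps δ ≤ (r1 * r2) ^ ps.length * arbIndex ps * δ := by
  induction ps generalizing δ with
  | nil => simp [cyclicOut]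
  | cons p ps ih =>
    obtain ⟨⟨ha, hb⟩, hpos'⟩ := List.forall_mem_cons.1 hpos
    have hC : 0 ≤ (r1 * r2) ^ ps.length * arbIndex ps := by
      have := arbIndex_pos hpos'
      positivity
    calc cyclicOut r1 r2 (p :: ps) δ = cyclicOut r1 r2 ps (swap r1 r2 p.1 p.2 δ) := rfl
      _ ≤ (r1 * r2) ^ ps.length * arbIndex ps * swap r1 r2 p.1 p.2 δ :=
        ih hpos' (swap_nonneg hr1 hr2 ha hb.le hδ)
      _ ≤ (r1 * r2) ^ ps.length * arbIndex ps * (r1 * r2 * (p.2 / p.1) * δ) :=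
        mul_le_mul_of_nonneg_left (swap_le hr1 hr2 ha hb.le hδ) hC
      _ = (r1 * r2) ^ (p :: ps).length * arbIndex (p :: ps) * δ := by
        rw [arbIndex_cons, List.length_cons, pow_succ]
        ring

lemma cyclicOut_lt (hr1 : 0 < r1) (hr2 : 0 < r2) {ps : List (ℝ × ℝ)} (hne : ps ≠ [])
    (hpos : ∀ p ∈ ps, 0 < p.1 ∧ 0 < p.2) {δ : ℝ} (hδ : 0 < δ) :
    cyclicOut r1 r2 ps δ < (r1 * r2) ^ ps.length * arbIndex ps * δ := by
  obtain ⟨p, ps, rfl⟩ := List.exists_cons_of_ne_nil hne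
  obtain ⟨⟨ha, hb⟩, hpos'⟩ := List.forall_mem_cons.1 hpos
  have hC : 0 < (r1 * r2) ^ ps.length * arbIndex ps := by
    have := arbIndex_pos hpos'
    positivity
  calc cyclicOut r1 r2 (p :: ps) δ = cyclicOut r1 r2 ps (swap r1 r2 p.1 p.2 δ) := rfl
    _ ≤ (r1 * r2) ^ ps.length * arbIndex ps * swap r1 r2 p.1 p.2 δ :=
      cyclicOut_le hr1.le hr2.le hpos' (swap_nonneg hr1.le hr2.le ha hb.le hδ.le)
    _ < (r1 * r2) ^ ps.length * arbIndex ps * (r1 * r2 * (p.2 / p.1) * δ) :=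
      mul_lt_mul_of_pos_left (swap_lt hr1 hr2 ha hb hδ) hC
    _ = (r1 * r2) ^ (p :: ps).length * arbIndex (p :: ps) * δ := by
      rw [arbIndex_cons, List.length_cons, pow_succ]
      ring

end CyclicOut

theorem low_index_cycle_not_profitable_general
    (n : ℕ) (ps : List (ℝ × ℝ)) (hlen : ps.length = n + 1)
    (hpos : ∀ p ∈ ps, 0 < p.1 ∧ 0 < p.2)
    (r1 r2 : ℝ) (hr1 : 0 < r1) (hr2 : 0 < r2)
    (hI : arbIndex ps ≤ 1 / (r1 ^ (n + 1) * r2 ^ (n + 1))) :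
    ∀ δ : ℝ, 0 < δ → cyclicOut r1 r2 ps δ - δ < 0 := by
  intro δ hδ
  have hne : ps ≠ [] := List.ne_nil_of_length_pos (by omega)
  have hfactor : (r1 * r2) ^ ps.length * arbIndex ps ≤ 1 := by
    rw [le_div_iff₀ (by positivity)] at hI
    rw [hlen, mul_pow]
    linarith
  have hout : cyclicOut r1 r2 ps δ < δ := calc
    cyclicOut r1 r2 ps δ < (r1 * r2) ^ ps.length * arbIndex ps * δ :=
      cyclicOut_lt hr1 hr2 hne hpos hδ
    _ ≤ δ := mul_le_of_le_one_left hδ.le hfactor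
  linarith

/-- if the arbitrage index of a cycle of length n+1 is at most
1/(r1^(n+1) * r2^(n+1)), then every positive input has strictly negative
utility. -/
theorem low_index_cycle_not_profitable
    (n : ℕ) (ps : List (ℝ × ℝ)) (hlen : ps.length = n + 1)
    (hpos : ∀ p ∈ ps, 0 < p.1 ∧ 0 < p.2)
    (r1 r2 : ℝ) (hr1 : 0 < r1) (hr1' : r1 ≤ 1) (hr2 : 0 < r2) (hr2' : r2 ≤ 1)
    (hI : arbIndex ps ≤ 1 / (r1 ^ (n + 1) * r2 ^ (n + 1))) :
    ∀ δ : ℝ, 0 < δ → cyclicOut r1 r2 ps δ - δ < 0 :=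
  low_index_cycle_not_profitable_general n ps hlen hpos r1 r2 hr1 hr2 hI
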